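/- arXiv:1511.04468 — 2 statements merged into one kernel-verified Lean document; each statement's English description precedes it below -/
import Mathlib

section
/- Let X and Y be independent random variables taking at most countably many values, and let Y' be a conditionally independent copy of Y over X. Let F(X,Y) be an absolutely integrable random variable. Suppose that E[F(X,Y)] = α + O(εα) and E[F(X,Y)F(X,Y')] = α² + O(εα²) for some α, ε > 0 with ε = O(1). Then for any θ > 0, one has E[F(X,Y) | X] = α + O_≤(θ) with probability 1 - O(εα²/θ²). -/
/-!
Write `p x = P(X = x)` and `g x = E[F(X,Y) | X = x]`. Summing over the fibers of `X` gives
`E F(X,Y) = ∑ p g`, and since `Y, Y'` are conditionally independent copies over `X`, the fiber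
integral of `F(X,Y) F(X,Y')` is `p g²`, so `E F(X,Y) F(X,Y') = ∑ p g²`. Hence the variance
`∑ p (g - α)² = E F(X,Y) F(X,Y') - 2 α E F(X,Y) + α²` is `O(ε α²)`, and Chebyshev's inequality on
the fibers bounds `P(|g(X) - α| > θ)` by `O(ε α² / θ²)`.
-/

open MeasureTheory

section Fibers

variable {Ω ι κ : Type*} [MeasurableSpace Ω] {μ : Measure Ω} {X : Ω → ι}

lemma measurableSet_preimage_of_measurableSet_fiber [Countable ι]
    (hX : ∀ x, MeasurableSet {ω | X ω = x}) (s : Set ι) : MeasurableSet (X ⁻¹' s) := by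
  let : MeasurableSpace ι := ⊤
  exact measurable_to_countable' hX trivial

lemma hasSum_setIntegral_fiber [Countable ι] (hX : ∀ x, MeasurableSet {ω | X ω = x}) {f : Ω → ℝ}
    (hf : Integrable f μ) : HasSum (fun x => ∫ ω in {ω | X ω = x}, f ω ∂μ) (∫ ω, f ω ∂μ) := by
  have hunion : (⋃ x, {ω | X ω = x}) = Set.univ := by
    ext ω
    simp
  have hdisj : Pairwise (Function.onFun Disjoint fun x => {ω | X ω = x}) := fun x y hxy =>
    Set.disjoint_left.2 fun ω (hx : X ω = x) (hy : X ω = y) => hxy (hx ▸ hy)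
  simpa [hunion] using hasSum_integral_iUnion hX hdisj (hunion ▸ hf.integrableOn)

lemma hasSum_measureReal_inter_fiber [Countable ι] [IsFiniteMeasure μ]
    (hX : ∀ x, MeasurableSet {ω | X ω = x}) {s : Set Ω} (hs : MeasurableSet s) :
    HasSum (fun x => μ.real (s ∩ {ω | X ω = x})) (μ.real s) := by
  have hind : Integrable (s.indicator 1) μ := (integrable_const (1 : ℝ)).indicator hs
  simpa only [integral_indicator_one hs, measureReal_restrict_apply hs] using
    hasSum_setIntegral_fiber hX hind

/-- On the fiber `X = x` the integrand `f (X ω) (Z ω)` only depends on `Z`, which is discrete. -/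
lemma hasSum_measureReal_mul_of_fiber [Countable κ] {Z : Ω → κ}
    (hX : ∀ x, MeasurableSet {ω | X ω = x}) (hZ : ∀ z, MeasurableSet {ω | Z ω = z})
    {f : ι → κ → ℝ} (hf : Integrable (fun ω => f (X ω) (Z ω)) μ) (x : ι) :
    HasSum (fun z => μ.real {ω | X ω = x ∧ Z ω = z} * f x z)
      (∫ ω in {ω | X ω = x}, f (X ω) (Z ω) ∂μ) := by
  convert hasSum_setIntegral_fiber (μ := μ.restrict {ω | X ω = x}) hZ hf.restrict using 2 with z
  have hconst : Set.EqOn (fun ω => f (X ω) (Z ω)) (fun _ => f x z)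
      ({ω | Z ω = z} ∩ {ω | X ω = x}) := fun ω (hω : Z ω = z ∧ X ω = x) => by
    simp only [hω.1, hω.2]
  rw [Measure.restrict_restrict (hZ z), setIntegral_congr_fun ((hZ z).inter (hX x)) hconst,
    setIntegral_const, smul_eq_mul, Set.inter_comm]
  rfl

end Fibers

lemma mul_hasSum_prod_eq_sq {κ : Type*} {p s t : ℝ} {q a : κ → ℝ} {r : κ × κ → ℝ}
    (hr : ∀ z, p * r z = q z.1 * q z.2) (hs : HasSum (fun y => q y * a y) s)
    (hs_norm : Summable fun y => ‖q y * a y‖)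
    (ht : HasSum (fun z => r z * (a z.1 * a z.2)) t) :
    p * t = s ^ 2 := by
  calc p * t = ∑' z : κ × κ, q z.1 * a z.1 * (q z.2 * a z.2) := by
        rw [← ht.tsum_eq, ← tsum_mul_left]
        congr 1 with z
        rw [← mul_assoc, hr z]
        ring
    _ = s ^ 2 := by
        rw [← tsum_mul_tsum_of_summable_norm hs_norm hs_norm, hs.tsum_eq, sq]

section Copy

variable {Ω ι κ : Type*} [MeasurableSpace Ω] {μ : Measure Ω} [Countable κ]
  {X : Ω → ι} {Y Y' : Ω → κ}

/-- Conditional independence of `Y, Y'` over `X = x` turns the second moment into a square. -/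
lemma measureReal_fiber_mul_setIntegral_copy (hX : ∀ x, MeasurableSet {ω | X ω = x})
    (hY : ∀ y, MeasurableSet {ω | Y ω = y}) (hY' : ∀ y, MeasurableSet {ω | Y' ω = y})
    (hdist : ∀ x y, μ {ω | X ω = x ∧ Y' ω = y} = μ {ω | X ω = x ∧ Y ω = y})
    (hcond : ∀ x y y', μ {ω | X ω = x} * μ {ω | X ω = x ∧ Y ω = y ∧ Y' ω = y'} =
      μ {ω | X ω = x ∧ Y ω = y} * μ {ω | X ω = x ∧ Y' ω = y'})
    {F : ι → κ → ℝ} (hF : Integrable (fun ω => F (X ω) (Y ω)) μ)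
    (hFF : Integrable (fun ω => F (X ω) (Y ω) * F (X ω) (Y' ω)) μ) (x : ι) :
    μ.real {ω | X ω = x} * ∫ ω in {ω | X ω = x}, F (X ω) (Y ω) * F (X ω) (Y' ω) ∂μ =
      (∫ ω in {ω | X ω = x}, F (X ω) (Y ω) ∂μ) ^ 2 := by
  have hYY' : ∀ z : κ × κ, MeasurableSet {ω | (Y ω, Y' ω) = z} := fun z => by
    simpa only [Prod.ext_iff, Set.ofPred_and] using (hY z.1).inter (hY' z.2)
  have hpair := hasSum_measureReal_mul_of_fiber (f := fun x z => F x z.1 * F x z.2) hX hYY' hFF x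
  simp only [Prod.ext_iff] at hpair
  refine mul_hasSum_prod_eq_sq (fun z => ?_) (hasSum_measureReal_mul_of_fiber hX hY hF x) ?_ hpair
  · simp only [measureReal_def, ← ENNReal.toReal_mul, hcond, hdist]
  · refine (hasSum_measureReal_mul_of_fiber (f := fun x y => |F x y|) hX hY hF.abs x).summable.congr
      fun y => ?_
    rw [norm_mul, Real.norm_of_nonneg measureReal_nonneg, Real.norm_eq_abs]

end Copy

section Chebyshev

variable {Ω ι : Type*} [MeasurableSpace Ω] {μ : Measure Ω} [Countable ι] {X : Ω → ι}

lemma measureReal_lt_abs_sub_le [IsFiniteMeasure μ] (hX : ∀ x, MeasurableSet {ω | X ω = x})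
    {g : ι → ℝ} {α θ V : ℝ} (hθ : 0 < θ)
    (hV : HasSum (fun x => μ.real {ω | X ω = x} * (g x - α) ^ 2) V) :
    μ.real {ω | θ < |g (X ω) - α|} ≤ V / θ ^ 2 := by
  set s := {ω | θ < |g (X ω) - α|}
  have hs : MeasurableSet s :=
    measurableSet_preimage_of_measurableSet_fiber hX {x | θ < |g x - α|}
  refine hasSum_le (fun x => ?_) (hasSum_measureReal_inter_fiber hX hs) (hV.div_const (θ ^ 2))
  by_cases hx : θ < |g x - α|
  · have hθx : 1 ≤ (g x - α) ^ 2 / θ ^ 2 := by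
      rw [one_le_div (by positivity), ← sq_abs (g x - α)]
      exact pow_le_pow_left₀ hθ.le hx.le 2
    calc μ.real (s ∩ {ω | X ω = x})
        _ ≤ μ.real {ω | X ω = x} := measureReal_mono Set.inter_subset_right
        _ ≤ μ.real {ω | X ω = x} * ((g x - α) ^ 2 / θ ^ 2) :=
          le_mul_of_one_le_right measureReal_nonneg hθx
        _ = μ.real {ω | X ω = x} * (g x - α) ^ 2 / θ ^ 2 := (mul_div_assoc ..).symm
  · have hempty : s ∩ {ω | X ω = x} = ∅ :=
      Set.eq_empty_of_forall_notMem fun ω ⟨(hω : θ < |g (X ω) - α|), (hωx : X ω = x)⟩ =>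
        hx (hωx ▸ hω)
    rw [hempty, measureReal_empty]
    positivity

lemma ofReal_one_sub_le_of_measureReal_compl_le [IsProbabilityMeasure μ] {s : Set Ω} {c : ℝ}
    (hs : MeasurableSet s) (hc : μ.real sᶜ ≤ c) : ENNReal.ofReal (1 - c) ≤ μ s := by
  rw [← ofReal_measureReal]
  exact ENNReal.ofReal_le_ofReal (by linarith [probReal_compl_eq_one_sub (μ := μ) hs])

end Chebyshev

section Variance

variable {Ω ι κ : Type*} [MeasurableSpace Ω] {μ : Measure Ω} [IsProbabilityMeasure μ]
  [Countable ι] [Countable κ] {X : Ω → ι} {Y Y' : Ω → κ}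

lemma hasSum_measureReal_fiber_mul_sq_sub (hX : ∀ x, MeasurableSet {ω | X ω = x})
    (hY : ∀ y, MeasurableSet {ω | Y ω = y}) (hY' : ∀ y, MeasurableSet {ω | Y' ω = y})
    (hdist : ∀ x y, μ {ω | X ω = x ∧ Y' ω = y} = μ {ω | X ω = x ∧ Y ω = y})
    (hcond : ∀ x y y', μ {ω | X ω = x} * μ {ω | X ω = x ∧ Y ω = y ∧ Y' ω = y'} =
      μ {ω | X ω = x ∧ Y ω = y} * μ {ω | X ω = x ∧ Y' ω = y'})
    {F : ι → κ → ℝ} (hF : Integrable (fun ω => F (X ω) (Y ω)) μ)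
    (hFF : Integrable (fun ω => F (X ω) (Y ω) * F (X ω) (Y' ω)) μ) {g : ι → ℝ}
    (hg : ∀ x, g x = (∫ ω in {ω | X ω = x}, F (X ω) (Y ω) ∂μ) / (μ {ω | X ω = x}).toReal)
    (α : ℝ) :
    HasSum (fun x => μ.real {ω | X ω = x} * (g x - α) ^ 2)
      ((∫ ω, F (X ω) (Y ω) * F (X ω) (Y' ω) ∂μ) - 2 * α * (∫ ω, F (X ω) (Y ω) ∂μ) + α ^ 2) := by
  have hfiber : ∀ x, (∫ ω in {ω | X ω = x}, F (X ω) (Y ω) ∂μ) = μ.real {ω | X ω = x} * g x ∧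
      (∫ ω in {ω | X ω = x}, F (X ω) (Y ω) * F (X ω) (Y' ω) ∂μ) =
        μ.real {ω | X ω = x} * g x ^ 2 := fun x => by
    by_cases hpx : μ.real {ω | X ω = x} = 0
    · have hnull : μ {ω | X ω = x} = 0 := (measureReal_eq_zero_iff).1 hpx
      simp only [setIntegral_measure_zero _ hnull, hpx, zero_mul, and_self]
    · have hmean : (∫ ω in {ω | X ω = x}, F (X ω) (Y ω) ∂μ) = μ.real {ω | X ω = x} * g x := by
        rw [hg x, ← measureReal_def, mul_div_cancel₀ _ hpx]
      refine ⟨hmean, mul_left_cancel₀ hpx ?_⟩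
      rw [measureReal_fiber_mul_setIntegral_copy hX hY hY' hdist hcond hF hFF x, hmean]
      ring
  have hp : HasSum (fun x => μ.real {ω | X ω = x}) 1 := by
    simpa using hasSum_measureReal_inter_fiber (μ := μ) hX MeasurableSet.univ
  have h₁ := hasSum_setIntegral_fiber hX hF
  have h₂ := hasSum_setIntegral_fiber hX hFF
  simp only [fun x => (hfiber x).1, fun x => (hfiber x).2] at h₁ h₂
  have hterm : ∀ x, μ.real {ω | X ω = x} * (g x - α) ^ 2 = μ.real {ω | X ω = x} * g x ^ 2 -
      2 * α * (μ.real {ω | X ω = x} * g x) + α ^ 2 * μ.real {ω | X ω = x} := fun x => by ring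
  simpa only [hterm, mul_one] using (h₂.sub (h₁.mul_left (2 * α))).add (hp.mul_left (α ^ 2))

end Variance

/-- Chebyshev-type concentration: if `X, Y` are independent discrete random
variables, `Y'` is a conditionally independent copy of `Y` over `X`, and
`E F(X,Y) = α + O(εα)`, `E F(X,Y)F(X,Y') = α² + O(εα²)` with `ε = O(1)`, then
for any `θ > 0` one has `E(F(X,Y) | X) = α + O_≤(θ)` with probability
`1 - O(εα²/θ²)`. -/
theorem stmt_0 (Cin : ℝ) (hCin : 0 < Cin) :
    ∃ Cout : ℝ, 0 < Cout ∧
    ∀ (Ω ι κ : Type) [MeasurableSpace Ω] (μ : Measure Ω) [IsProbabilityMeasure μ]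
      [Countable ι] [Countable κ]
      (X : Ω → ι) (Y Y' : Ω → κ),
      (∀ x : ι, MeasurableSet {ω | X ω = x}) →
      (∀ y : κ, MeasurableSet {ω | Y ω = y}) →
      (∀ y : κ, MeasurableSet {ω | Y' ω = y}) →
      -- `X` and `Y` are independent
      (∀ (x : ι) (y : κ),
        μ {ω | X ω = x ∧ Y ω = y} = μ {ω | X ω = x} * μ {ω | Y ω = y}) →
      -- `Y'` has the same conditional distribution over `X` as `Y`
      (∀ (x : ι) (y : κ),
        μ {ω | X ω = x ∧ Y' ω = y} = μ {ω | X ω = x ∧ Y ω = y}) →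
      -- `Y` and `Y'` are conditionally independent over `X`
      (∀ (x : ι) (y y' : κ),
        μ {ω | X ω = x} * μ {ω | X ω = x ∧ Y ω = y ∧ Y' ω = y'} =
          μ {ω | X ω = x ∧ Y ω = y} * μ {ω | X ω = x ∧ Y' ω = y'}) →
      ∀ (F : ι → κ → ℝ),
      Integrable (fun ω => F (X ω) (Y ω)) μ →
      Integrable (fun ω => F (X ω) (Y ω) * F (X ω) (Y' ω)) μ →
      ∀ (α ε : ℝ), 0 < α → 0 < ε → ε ≤ Cin →
      |(∫ ω, F (X ω) (Y ω) ∂μ) - α| ≤ Cin * ε * α →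
      |(∫ ω, F (X ω) (Y ω) * F (X ω) (Y' ω) ∂μ) - α ^ 2| ≤ Cin * ε * α ^ 2 →
      ∀ θ : ℝ, 0 < θ →
      ∀ g : ι → ℝ,
      (∀ x : ι, g x = (∫ ω in {ω | X ω = x}, F (X ω) (Y ω) ∂μ) /
        (μ {ω | X ω = x}).toReal) →
      ENNReal.ofReal (1 - Cout * ε * α ^ 2 / θ ^ 2) ≤
        μ {ω | |g (X ω) - α| ≤ θ} := by
  refine ⟨3 * Cin, by positivity, ?_⟩
  intro Ω ι κ _ μ _ _ _ X Y Y' hX hY hY' _ hdist hcond F hF hFF α ε hα _ _ h₁ h₂ θ hθ g hg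
  have hV := hasSum_measureReal_fiber_mul_sq_sub hX hY hY' hdist hcond hF hFF hg α
  have hVle : (∫ ω, F (X ω) (Y ω) * F (X ω) (Y' ω) ∂μ) - 2 * α * (∫ ω, F (X ω) (Y ω) ∂μ) +
      α ^ 2 ≤ 3 * Cin * ε * α ^ 2 := by
    obtain ⟨h₁, -⟩ := abs_le.1 h₁
    obtain ⟨-, h₂⟩ := abs_le.1 h₂
    nlinarith [mul_le_mul_of_nonneg_left h₁ hα.le]
  have hgood : MeasurableSet {ω | |g (X ω) - α| ≤ θ} :=
    measurableSet_preimage_of_measurableSet_fiber hX {x | |g x - α| ≤ θ}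
  refine ofReal_one_sub_le_of_measureReal_compl_le hgood ?_
  calc μ.real {ω | |g (X ω) - α| ≤ θ}ᶜ = μ.real {ω | θ < |g (X ω) - α|} := by
        simp only [Set.compl_ofPred, not_le]
    _ ≤ _ / θ ^ 2 := measureReal_lt_abs_sub_le hX hθ hV
    _ ≤ 3 * Cin * ε * α ^ 2 / θ ^ 2 := by gcongr
end

section
/- Let y = c·x·log x·log₃x/log₂x and z = x^{log₃x/(4 log₂x)}. Then the number of z-smooth numbers in [1, y], multiplied by log x (to account for multiplication by powers of a fixed number B₀ ≤ x), is o(x/log x) as x → ∞; more precisely it is at most log x · y · exp(-u log u + O(u log log(u+2))) with u = log y/log z, which equals y/log^{3+o(1)} x. -/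
open Real Filter
open scoped Classical

set_option maxHeartbeats 1000000 in
/-- With `y = c·x·log x·log₃x/log₂x`, `z = x^(log₃x/(4log₂x))` and
`u = log y/log z`, assuming de Bruijn's bound
`#{n ≤ y : n is z-smooth} ≤ y·exp(-u log u + C·u·log log(u+2))`, the number of
`z`-smooth numbers in `[1,y]` multiplied by `log x` is `o(x/log x)`. -/
theorem stmt_7 (c : ℝ) (hc : 0 < c) (C : ℝ) (hC : 0 ≤ C)
    (y : ℝ → ℝ) (hy : ∀ x, y x = c * x * Real.log x *
      Real.log (Real.log (Real.log x)) / Real.log (Real.log x))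
    (z : ℝ → ℝ) (hz : ∀ x, z x = x ^
      (Real.log (Real.log (Real.log x)) / (4 * Real.log (Real.log x))))
    (u : ℝ → ℝ) (hu : ∀ x, u x = Real.log (y x) / Real.log (z x))
    (smoothCount : ℝ → ℕ)
    (hcount : ∀ x, smoothCount x =
      ((Finset.Icc 1 ⌊y x⌋₊).filter
        (fun n => ∀ p : ℕ, p.Prime → p ∣ n → (p : ℝ) ≤ z x)).card)
    (hdeBruijn : ∀ᶠ x : ℝ in atTop,
      (smoothCount x : ℝ) ≤ y x *
        Real.exp (-(u x) * Real.log (u x) +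
          C * u x * Real.log (Real.log (u x + 2)))) :
    Tendsto (fun x => (smoothCount x : ℝ) * Real.log x / (x / Real.log x))
      atTop (nhds 0) := by
  have hL1top : Tendsto (fun x : ℝ => Real.log x) atTop atTop := Real.tendsto_log_atTop
  have hL2top : Tendsto (fun x : ℝ => Real.log (Real.log x)) atTop atTop :=
    Real.tendsto_log_atTop.comp hL1top
  have hL3top : Tendsto (fun x : ℝ => Real.log (Real.log (Real.log x))) atTop atTop :=
    Real.tendsto_log_atTop.comp hL2top
  have hL4top : Tendsto (fun x : ℝ =>
      Real.log (Real.log (Real.log (Real.log x)))) atTop atTop :=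
    Real.tendsto_log_atTop.comp hL3top
  have hlogdiv : Tendsto (fun t : ℝ => Real.log t / t) atTop (nhds 0) :=
    Real.isLittleO_log_id_atTop.tendsto_div_nhds_zero
  have hratio0 : Tendsto (fun x : ℝ =>
      Real.log (Real.log (Real.log (Real.log x))) / Real.log (Real.log (Real.log x)))
      atTop (nhds 0) := hlogdiv.comp hL3top
  -- the dominating function
  have hgt : Tendsto (fun x : ℝ => c * Real.exp (-(1/2) * Real.log (Real.log x)))
      atTop (nhds 0) := by
    have h2 : Tendsto (fun x : ℝ => (1/2) * Real.log (Real.log x)) atTop atTop :=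
      hL2top.const_mul_atTop (by norm_num)
    have h1 : Tendsto (fun x : ℝ => -(1/2) * Real.log (Real.log x)) atTop atBot := by
      exact (tendsto_neg_atTop_atBot.comp h2).congr fun x => (neg_mul _ _).symm
    have h3 := Real.tendsto_exp_atBot.comp h1
    simpa using h3.const_mul c
  -- eventual smallness facts
  have hsm : ∀ᶠ x : ℝ in atTop,
      (4 + 16*C) * (Real.log (Real.log (Real.log (Real.log x))) /
        Real.log (Real.log (Real.log x))) < 1/2 := by
    have h0 : Tendsto (fun x : ℝ => (4 + 16*C) *
        (Real.log (Real.log (Real.log (Real.log x))) /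
          Real.log (Real.log (Real.log x)))) atTop (nhds 0) := by
      simpa using hratio0.const_mul (4 + 16*C)
    exact h0.eventually_lt_const (by norm_num)
  have hcx : ∀ᶠ x : ℝ in atTop, c * (Real.log x / x) < 1 := by
    have h0 : Tendsto (fun x : ℝ => c * (Real.log x / x)) atTop (nhds 0) := by
      simpa using hlogdiv.const_mul c
    exact h0.eventually_lt_const (by norm_num)
  apply squeeze_zero' (g := fun x : ℝ => c * Real.exp (-(1/2) * Real.log (Real.log x)))
  · filter_upwards [eventually_gt_atTop (0:ℝ), hL1top.eventually_gt_atTop 0] with x hx hl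
    positivity
  · filter_upwards [hdeBruijn, eventually_ge_atTop (3:ℝ),
      hL1top.eventually_ge_atTop 3, hL2top.eventually_ge_atTop 15,
      hL3top.eventually_ge_atTop 2, hL4top.eventually_ge_atTop 1,
      hsm, hcx, hL3top.eventually_ge_atTop (1/c)] with
      x hdB hx3 h1 h2 h3 h4 hsmx hcxx hc3
    set L1 := Real.log x with hL1d
    set L2 := Real.log L1 with hL2d
    set L3 := Real.log L2 with hL3d
    set L4 := Real.log L3 with hL4d
    have hx0 : (0:ℝ) < x := by linarith
    have hL1p : (0:ℝ) < L1 := by linarith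
    have hL2p : (0:ℝ) < L2 := by linarith
    have hL3p : (0:ℝ) < L3 := by linarith
    have hL4p : (0:ℝ) < L4 := by linarith
    have hL2leL1 : L2 ≤ L1 := by
      have := Real.log_le_sub_one_of_pos hL1p; rw [← hL2d] at this; linarith
    have hL3leL2 : L3 ≤ L2 := by
      have := Real.log_le_sub_one_of_pos hL2p; rw [← hL3d] at this; linarith
    have hL4leL3 : L4 ≤ L3 := by
      have := Real.log_le_sub_one_of_pos hL3p; rw [← hL4d] at this; linarith
    have hyx : y x = c * x * L1 * L3 / L2 := hy x
    -- x ≤ y x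
    have hcL3 : 1 ≤ c * L3 := by
      rw [div_le_iff₀ hc] at hc3; linarith [hc3]
    have hxley : x ≤ y x := by
      rw [hyx, le_div_iff₀ hL2p]
      nlinarith [mul_pos hx0 hL2p, mul_le_mul_of_nonneg_left hL2leL1 hx0.le,
        mul_nonneg hx0.le hL1p.le]
    have hylex2 : y x ≤ x^2 := by
      rw [hyx, div_le_iff₀ hL2p]
      have hcL1 : c * L1 < x := by
        have h' : c * L1 / x < 1 := by rwa [mul_div_assoc]
        rw [div_lt_iff₀ hx0] at h'
        linarith
      nlinarith [mul_pos hx0 hL3p, mul_nonneg (mul_nonneg hc.le hx0.le) hL1p.le]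
    have hyp : 0 < y x := lt_of_lt_of_le hx0 hxley
    have hlogy1 : L1 ≤ Real.log (y x) := by
      have := Real.log_le_log hx0 hxley; rw [← hL1d] at this; exact this
    have hlogy2 : Real.log (y x) ≤ 2 * L1 := by
      have := Real.log_le_log hyp hylex2
      rwa [Real.log_pow, ← hL1d] at this
      
    have hlogz : Real.log (z x) = L3 / (4 * L2) * L1 := by
      rw [hz x, Real.log_rpow hx0, ← hL1d]
    have hlogzp : 0 < Real.log (z x) := by
      rw [hlogz]
      exact mul_pos (div_pos hL3p (by linarith)) hL1p
    have hueq : u x = Real.log (y x) / (L3 / (4 * L2) * L1) := by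
      rw [hu x, hlogz]
    have hzp' : 0 < L3 / (4 * L2) * L1 := by rw [← hlogz]; exact hlogzp
    have hu_lb : 4 * L2 / L3 ≤ u x := by
      rw [hueq, div_le_div_iff₀ hL3p hzp']
      have e : 4 * L2 * (L3 / (4 * L2) * L1) = L3 * L1 := by field_simp
      rw [e]
      nlinarith [mul_le_mul_of_nonneg_right hlogy1 hL3p.le]
    have hu_ub : u x ≤ 8 * L2 / L3 := by
      rw [hueq, div_le_div_iff₀ hzp' hL3p]
      have e : 8 * L2 * (L3 / (4 * L2) * L1) = 2 * (L3 * L1) := by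
        field_simp
        ring
      rw [e]
      nlinarith [mul_le_mul_of_nonneg_right hlogy2 hL3p.le]
    have hulbp : 0 < 4 * L2 / L3 := div_pos (by linarith) hL3p
    have hup : 0 < u x := lt_of_lt_of_le hulbp hu_lb
    have hu4 : 4 ≤ u x := by
      refine le_trans ?_ hu_lb
      rw [le_div_iff₀ hL3p]; nlinarith
    -- lower bound on u * log u
    have hlogu_lb : L3 - L4 ≤ Real.log (u x) := by
      have h := Real.log_le_log hulbp hu_lb
      have e : Real.log (4 * L2 / L3) = Real.log 4 + L3 - L4 := by
        rw [Real.log_div (by positivity) hL3p.ne', Real.log_mul (by norm_num) hL2p.ne',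
          ← hL3d, ← hL4d]
      rw [e] at h
      have : (0:ℝ) ≤ Real.log 4 := Real.log_nonneg (by norm_num)
      linarith
    have hulogu : 4 * L2 - 4 * L2 * (L4 / L3) ≤ u x * Real.log (u x) := by
      have h := mul_le_mul hu_lb hlogu_lb (by linarith) hup.le
      have e : 4 * L2 / L3 * (L3 - L4) = 4 * L2 - 4 * L2 * (L4 / L3) := by
        field_simp
      rw [e] at h; exact h
    -- upper bound on log log (u + 2)
    have hlog6 : (1:ℝ) ≤ Real.log 6 := by
      rw [Real.le_log_iff_exp_le (by norm_num)]
      have := Real.exp_one_lt_d9; linarith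
    have hlogu2_lb : (1:ℝ) ≤ Real.log (u x + 2) := by
      refine le_trans hlog6 (Real.log_le_log (by norm_num) (by linarith))
    have hu2ub : u x + 2 ≤ L2 ^ 2 := by
      have h8 : 8 * L2 / L3 ≤ 4 * L2 := by
        rw [div_le_iff₀ hL3p]; nlinarith
      nlinarith
    have hlogu2_ub : Real.log (u x + 2) ≤ 2 * L3 := by
      have := Real.log_le_log (by linarith : (0:ℝ) < u x + 2) hu2ub
      rwa [Real.log_pow, ← hL3d] at this
    have hloglog_ub : Real.log (Real.log (u x + 2)) ≤ 2 * L4 := by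
      have h := Real.log_le_log (by linarith) hlogu2_ub
      have e : Real.log (2 * L3) = Real.log 2 + L4 := by
        rw [Real.log_mul (by norm_num) hL3p.ne', ← hL4d]
      rw [e] at h
      have h2 : Real.log 2 < 1 := by
        have := Real.log_two_lt_d9; linarith
      linarith
    have hloglog_nonneg : 0 ≤ Real.log (Real.log (u x + 2)) :=
      Real.log_nonneg hlogu2_lb
    have hCterm : C * u x * Real.log (Real.log (u x + 2)) ≤ 16 * C * L2 * (L4 / L3) := by
      have h := mul_le_mul (mul_le_mul_of_nonneg_left hu_ub hC) hloglog_ub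
        hloglog_nonneg (by positivity)
      have e : C * (8 * L2 / L3) * (2 * L4) = 16 * C * L2 * (L4 / L3) := by
        field_simp; ring
      rw [e] at h; exact h
    -- exponent bound
    have hE : -(u x) * Real.log (u x) + C * u x * Real.log (Real.log (u x + 2))
        ≤ -(7/2) * L2 := by
      have hm : (4 + 16 * C) * (L4 / L3) * L2 ≤ (1/2) * L2 :=
        mul_le_mul_of_nonneg_right hsmx.le hL2p.le
      nlinarith [hulogu, hCterm]
    -- final chain
    have hN : (smoothCount x : ℝ) ≤ y x * Real.exp (-(7/2) * L2) := by
      refine le_trans hdB ?_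
      exact mul_le_mul_of_nonneg_left (Real.exp_le_exp.mpr hE) hyp.le
    have hdiveq : (smoothCount x : ℝ) * L1 / (x / L1)
        = (smoothCount x : ℝ) * L1 ^ 2 / x := by
      field_simp
    rw [hdiveq]
    have hb1 : (smoothCount x : ℝ) * L1 ^ 2 / x
        ≤ y x * Real.exp (-(7/2) * L2) * L1 ^ 2 / x := by
      gcongr
    refine le_trans hb1 ?_
    rw [hyx]
    have e1 : c * x * L1 * L3 / L2 * Real.exp (-(7/2) * L2) * L1 ^ 2 / x
        = c * (L3 / L2) * (L1 ^ 3 * Real.exp (-(7/2) * L2)) := by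
      field_simp
    rw [e1]
    have e2 : L1 ^ 3 * Real.exp (-(7/2) * L2) = Real.exp (-(1/2) * L2) := by
      have hL1exp : L1 = Real.exp L2 := by rw [hL2d, Real.exp_log hL1p]
      rw [hL1exp, ← Real.exp_nat_mul, ← Real.exp_add]
      congr 1
      push_cast
      ring
    rw [e2]
    have h31 : L3 / L2 ≤ 1 := (div_le_one hL2p).mpr hL3leL2
    have hep := (Real.exp_pos (-(1/2) * L2)).le
    have hfin := mul_le_mul_of_nonneg_right
      (mul_le_mul_of_nonneg_left h31 hc.le) hep
    rw [mul_one] at hfin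
    exact hfin
  · exact hgt
end
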